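/- arXiv:1207.2713 — 2 statements merged into one kernel-verified Lean document; each statement's English description precedes it below -/
import Mathlib

section
/- For the recursive integrals X^{(n)} defined with a nonvanishing continuous function f on [a,b] and base point x₀ ∈ [a,b], the bound |X^{(n)}(x)| ≤ max(c₁, c₂)^n · |x - x₀|^n holds for all x ∈ [a,b] and n ≥ 0, where c₁ = sup_{[a,b]} |f|² and c₂ = sup_{[a,b]} |1/f|². -/
open Set Filter MeasureTheory intervalIntegral

/-- Recursive integrals `X^{(n)}` based at `x₀`. -/
noncomputable def Xrec (f : ℝ → ℂ) (x₀ : ℝ) : ℕ → ℝ → ℂ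
  | 0, _ => 1
  | n + 1, x => ((n : ℂ) + 1) * ∫ s in x₀..x, Xrec f x₀ n s * (f s ^ 2) ^ ((-1 : ℤ) ^ (n + 1))

/-- Recursive integrals `X̃^{(n)}` based at `x₀`. -/
noncomputable def Xtil (f : ℝ → ℂ) (x₀ : ℝ) : ℕ → ℝ → ℂ
  | 0, _ => 1
  | n + 1, x => ((n : ℂ) + 1) * ∫ s in x₀..x, Xtil f x₀ n s * (f s ^ 2) ^ ((-1 : ℤ) ^ n)

/-- The system of functions `φ_k`. -/
noncomputable def phi (f : ℝ → ℂ) (x₀ : ℝ) (k : ℕ) (x : ℝ) : ℂ :=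
  if Odd k then f x * Xrec f x₀ k x else f x * Xtil f x₀ k x

/-- The system of functions `ψ_k`. -/
noncomputable def psi (f : ℝ → ℂ) (x₀ : ℝ) (k : ℕ) (x : ℝ) : ℂ :=
  if Odd k then Xtil f x₀ k x / f x else Xrec f x₀ k x / f x

open scoped Interval

theorem norm_zpow_neg_one_pow_le_max {𝕜 : Type*} [NormedDivisionRing 𝕜] (z : 𝕜) (m : ℕ) :
    ‖z ^ ((-1 : ℤ) ^ m)‖ ≤ max ‖z‖ ‖z⁻¹‖ := by
  rcases m.even_or_odd with hm | hm <;> simp [hm.neg_one_pow]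

theorem norm_integral_le_of_norm_le_mul_abs_sub_pow {E : Type*} [NormedAddCommGroup E]
    [NormedSpace ℝ E] {g : ℝ → E} {x₀ x C : ℝ} {n : ℕ} (hC : 0 ≤ C)
    (hg : ∀ s ∈ Ι x₀ x, ‖g s‖ ≤ C * |s - x₀| ^ n) :
    ‖∫ s in x₀..x, g s‖ ≤ C * (|x - x₀| ^ (n + 1) / (n + 1)) := by
  have hint : IntervalIntegrable (fun s => C * |s - x₀| ^ n) volume x₀ x :=
    (by fun_prop : Continuous fun s => C * |s - x₀| ^ n).intervalIntegrable _ _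
  calc ‖∫ s in x₀..x, g s‖ ≤ |∫ s in x₀..x, C * |s - x₀| ^ n| :=
        norm_integral_le_abs_of_norm_le ((ae_restrict_mem measurableSet_uIoc).mono hg) hint
    _ = C * (|x - x₀| ^ (n + 1) / (n + 1)) := by
        rw [abs_intervalIntegral_eq, MeasureTheory.integral_const_mul, integral_pow_abs_sub_uIoc,
          abs_of_nonneg (by positivity)]

theorem norm_Xrec_le_of_norm_weight_le {f : ℝ → ℂ} {a b x₀ M : ℝ} (hx₀ : x₀ ∈ Icc a b)
    (hw : ∀ m : ℕ, ∀ s ∈ Icc a b, ‖(f s ^ 2) ^ ((-1 : ℤ) ^ m)‖ ≤ M) (n : ℕ) :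
    ∀ x ∈ Icc a b, ‖Xrec f x₀ n x‖ ≤ M ^ n * |x - x₀| ^ n := by
  have hM : 0 ≤ M := (norm_nonneg _).trans (hw 0 x₀ hx₀)
  induction n with
  | zero => simp [Xrec]
  | succ n ih =>
    intro x hx
    have hsub : Ι x₀ x ⊆ Icc a b := uIoc_subset_uIcc.trans (uIcc_subset_Icc hx₀ hx)
    have hintegral : ‖∫ s in x₀..x, Xrec f x₀ n s * (f s ^ 2) ^ ((-1 : ℤ) ^ (n + 1))‖ ≤
        M ^ (n + 1) * (|x - x₀| ^ (n + 1) / (n + 1)) := by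
      refine norm_integral_le_of_norm_le_mul_abs_sub_pow (by positivity) fun s hs => ?_
      calc ‖Xrec f x₀ n s * (f s ^ 2) ^ ((-1 : ℤ) ^ (n + 1))‖
          ≤ M ^ n * |s - x₀| ^ n * M := by
            rw [norm_mul]
            exact mul_le_mul (ih s (hsub hs)) (hw _ s (hsub hs)) (norm_nonneg _) (by positivity)
        _ = M ^ (n + 1) * |s - x₀| ^ n := by ring
    have hcoef : ‖(n : ℂ) + 1‖ = n + 1 := by exact_mod_cast Complex.norm_natCast (n + 1)
    calc ‖Xrec f x₀ (n + 1) x‖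
        = (n + 1) * ‖∫ s in x₀..x, Xrec f x₀ n s * (f s ^ 2) ^ ((-1 : ℤ) ^ (n + 1))‖ := by
          rw [Xrec, norm_mul, hcoef]
      _ ≤ (n + 1) * (M ^ (n + 1) * (|x - x₀| ^ (n + 1) / (n + 1))) := by gcongr
      _ = M ^ (n + 1) * |x - x₀| ^ (n + 1) := by field_simp

theorem Xrec_bound_general (a b : ℝ) (f : ℝ → ℂ)
    (hf : ContinuousOn f (Icc a b)) (hfne : ∀ x ∈ Icc a b, f x ≠ 0)
    (x₀ : ℝ) (hx₀ : x₀ ∈ Icc a b) (c₁ c₂ : ℝ)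
    (hc₁ : c₁ = sSup ((fun x => ‖f x‖ ^ 2) '' Icc a b))
    (hc₂ : c₂ = sSup ((fun x => ‖1 / f x‖ ^ 2) '' Icc a b)) :
    ∀ n : ℕ, ∀ x ∈ Icc a b,
      ‖Xrec f x₀ n x‖ ≤ max c₁ c₂ ^ n * |x - x₀| ^ n := by
  refine fun n => norm_Xrec_le_of_norm_weight_le hx₀ (fun m s hs => ?_) n
  have hf₁ : ‖f s‖ ^ 2 ≤ c₁ := hc₁ ▸ (hf.norm.pow 2).le_sSup_image_Icc hs
  have hf₂ : ‖1 / f s‖ ^ 2 ≤ c₂ :=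
    hc₂ ▸ ((continuousOn_const.div hf hfne).norm.pow 2).le_sSup_image_Icc hs
  calc ‖(f s ^ 2) ^ ((-1 : ℤ) ^ m)‖ ≤ max ‖f s ^ 2‖ ‖(f s ^ 2)⁻¹‖ :=
        norm_zpow_neg_one_pow_le_max _ m
    _ ≤ max c₁ c₂ := by
        rw [norm_pow, norm_inv, norm_pow, ← inv_pow, ← norm_inv, ← one_div]
        exact max_le_max hf₁ hf₂

theorem Xrec_bound (a b : ℝ) (hab : a ≤ b) (f : ℝ → ℂ)
    (hf : ContinuousOn f (Icc a b)) (hfne : ∀ x ∈ Icc a b, f x ≠ 0)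
    (x₀ : ℝ) (hx₀ : x₀ ∈ Icc a b) (c₁ c₂ : ℝ)
    (hc₁ : c₁ = sSup ((fun x => ‖f x‖ ^ 2) '' Icc a b))
    (hc₂ : c₂ = sSup ((fun x => ‖1 / f x‖ ^ 2) '' Icc a b)) :
    ∀ n : ℕ, ∀ x ∈ Icc a b,
      ‖Xrec f x₀ n x‖ ≤ max c₁ c₂ ^ n * |x - x₀| ^ n :=
  Xrec_bound_general a b f hf hfne x₀ hx₀ c₁ c₂ hc₁ hc₂
end

section
/- Let q : [a,b] → ℂ be continuous and f ∈ C²[a,b] a nonvanishing solution of f'' = q f. Then the function u₁ = Σ_{k=0}^∞ (λ^k/(2k)!) φ_{2k} is a C² solution of u'' − q u = λ u on (a,b). -/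
open Set Filter MeasureTheory intervalIntegral

/-!
Put `E = ∑ₖ λᵏ X̃^{(2k)} / (2k)!` and `O = ∑_{k ≥ 1} λᵏ X̃^{(2k-1)} / (2k-1)!`, so that `u₁ = f E`.
From `(X̃^{(n+1)})' = (n+1) X̃^{(n)} (f²)^{(-1)ⁿ}` one gets termwise `E' = O / f²` and
`O' = λ f² E`; termwise differentiation is legitimate because `‖X̃^{(n)}(x)‖ ≤ (K |x - x₀|)ⁿ`,
where `K` bounds `f²` and `f⁻²` on `[a, b]`, so all these series are dominated by exponential
series. Hence `(f E)' = f' E + O / f` and `(f' E + O / f)' = f'' E + λ f E = (q + λ) f E`: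
the two terms `± f' O / f²` cancel.
-/

open Topology Nat

open scoped Interval

section Xtil

variable {a b x₀ : ℝ} {f : ℝ → ℂ}

lemma continuousOn_sq_zpow_neg_one_pow {s : Set ℝ} (hf : ContinuousOn f s)
    (hf0 : ∀ x ∈ s, f x ≠ 0) (n : ℕ) :
    ContinuousOn (fun x => (f x ^ 2) ^ ((-1 : ℤ) ^ n)) s :=
  (hf.pow 2).zpow₀ _ fun x hx => Or.inl (pow_ne_zero 2 (hf0 x hx))

lemma norm_zpow_neg_one_pow_le (z : ℂ) (n : ℕ) :
    ‖z ^ ((-1 : ℤ) ^ n)‖ ≤ max ‖z‖ ‖z⁻¹‖ := by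
  rcases n.even_or_odd with hn | hn
  · simp [hn.neg_one_pow]
  · simp [hn.neg_one_pow]

lemma continuousOn_Xtil (hf : ContinuousOn f (Icc a b)) (hf0 : ∀ x ∈ Icc a b, f x ≠ 0)
    (hx₀ : x₀ ∈ Icc a b) (n : ℕ) : ContinuousOn (Xtil f x₀ n) (Icc a b) := by
  induction n with
  | zero => exact continuousOn_const
  | succ n ih =>
    have hab : a ≤ b := hx₀.1.trans hx₀.2
    have hint := ih.mul (continuousOn_sq_zpow_neg_one_pow hf hf0 n)
    rw [← uIcc_of_le hab] at hint hx₀ ⊢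
    exact continuousOn_const.mul
      (intervalIntegral.continuousOn_primitive_interval' hint.intervalIntegrable hx₀)

lemma hasDerivAt_Xtil_succ (hf : ContinuousOn f (Icc a b)) (hf0 : ∀ x ∈ Icc a b, f x ≠ 0)
    (hx₀ : x₀ ∈ Icc a b) (n : ℕ) {x : ℝ} (hx : x ∈ Ioo a b) :
    HasDerivAt (Xtil f x₀ (n + 1))
      (((n : ℂ) + 1) * (Xtil f x₀ n x * (f x ^ 2) ^ ((-1 : ℤ) ^ n))) x := by
  have hg := (continuousOn_Xtil hf hf0 hx₀ n).mul (continuousOn_sq_zpow_neg_one_pow hf hf0 n)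
  have hint : IntervalIntegrable _ volume x₀ x :=
    (hg.mono (uIcc_subset_Icc hx₀ (Ioo_subset_Icc_self hx))).intervalIntegrable
  exact (intervalIntegral.integral_hasDerivAt_right hint
    ((hg.mono Ioo_subset_Icc_self).stronglyMeasurableAtFilter isOpen_Ioo x hx)
    (hg.continuousAt (Icc_mem_nhds hx.1 hx.2))).const_mul _

/-- `∫ |s - x₀|ⁿ = |x - x₀|ⁿ⁺¹ / (n + 1)` absorbs the factor `n + 1` of the recursion. -/
lemma norm_Xtil_le (hx₀ : x₀ ∈ Icc a b) {K : ℝ} (hK : ∀ s ∈ Icc a b, ‖f s ^ 2‖ ≤ K ∧ ‖(f s ^ 2)⁻¹‖ ≤ K)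
    (n : ℕ) {x : ℝ} (hx : x ∈ Icc a b) : ‖Xtil f x₀ n x‖ ≤ K ^ n * |x - x₀| ^ n := by
  induction n generalizing x with
  | zero => simp [Xtil]
  | succ n ih =>
    have hsub := uIcc_subset_Icc hx₀ hx
    have hbound : ∀ s ∈ Ι x₀ x,
        ‖Xtil f x₀ n s * (f s ^ 2) ^ ((-1 : ℤ) ^ n)‖ ≤ K ^ (n + 1) * |s - x₀| ^ n := by
      intro s hs
      have hs' := hsub (uIoc_subset_uIcc hs)
      rw [norm_mul, pow_succ K, mul_right_comm]
      exact mul_le_mul (ih hs')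
        ((norm_zpow_neg_one_pow_le _ n).trans (max_le (hK s hs').1 (hK s hs').2)) (norm_nonneg _)
        (le_trans (norm_nonneg _) (ih hs'))
    have hint : ‖∫ s in x₀..x, Xtil f x₀ n s * (f s ^ 2) ^ ((-1 : ℤ) ^ n)‖
        ≤ K ^ (n + 1) * (|x - x₀| ^ (n + 1) / (n + 1)) := by
      rw [intervalIntegral.norm_integral_eq_norm_integral_uIoc, ← integral_pow_abs_sub_uIoc,
        ← MeasureTheory.integral_const_mul]
      refine norm_integral_le_of_norm_le ?_ (ae_restrict_of_forall_mem measurableSet_uIoc hbound)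
      exact Integrable.const_mul
        (Continuous.intervalIntegrable (u := fun s => |s - x₀| ^ n) (by fun_prop) x₀ x).def' _
    calc ‖Xtil f x₀ (n + 1) x‖
        = (n + 1) * ‖∫ s in x₀..x, Xtil f x₀ n s * (f s ^ 2) ^ ((-1 : ℤ) ^ n)‖ := by
          rw [Xtil, norm_mul]; norm_cast
      _ ≤ (n + 1) * (K ^ (n + 1) * (|x - x₀| ^ (n + 1) / (n + 1))) := by gcongr
      _ = K ^ (n + 1) * |x - x₀| ^ (n + 1) := by field_simp

lemma exists_norm_sq_le (hf : ContinuousOn f (Icc a b)) (hf0 : ∀ x ∈ Icc a b, f x ≠ 0) :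
    ∃ K, ∀ s ∈ Icc a b, ‖f s ^ 2‖ ≤ K ∧ ‖(f s ^ 2)⁻¹‖ ≤ K := by
  obtain ⟨K₁, h₁⟩ := isCompact_Icc.exists_bound_of_continuousOn (hf.pow 2)
  obtain ⟨K₂, h₂⟩ := isCompact_Icc.exists_bound_of_continuousOn
    ((hf.pow 2).inv₀ fun x hx => pow_ne_zero 2 (hf0 x hx))
  exact ⟨max K₁ K₂, fun s hs => ⟨(h₁ s hs).trans (le_max_left _ _),
    (h₂ s hs).trans (le_max_right _ _)⟩⟩

lemma exists_norm_Xtil_le (hf : ContinuousOn f (Icc a b)) (hf0 : ∀ x ∈ Icc a b, f x ≠ 0)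
    (hx₀ : x₀ ∈ Icc a b) : ∃ B, 1 ≤ B ∧ ∀ n, ∀ x ∈ Icc a b, ‖Xtil f x₀ n x‖ ≤ B ^ n := by
  obtain ⟨K, hK⟩ := exists_norm_sq_le hf hf0
  have hK0 : 0 ≤ K := (norm_nonneg _).trans (hK x₀ hx₀).1
  refine ⟨max 1 (K * (b - a)), le_max_left _ _, fun n x hx => ?_⟩
  have hdist : |x - x₀| ≤ b - a := abs_sub_le_of_le_of_le hx.1 hx.2 hx₀.1 hx₀.2
  calc ‖Xtil f x₀ n x‖ ≤ (K * |x - x₀|) ^ n :=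
        (norm_Xtil_le hx₀ hK n hx).trans_eq (mul_pow ..).symm
    _ ≤ max 1 (K * (b - a)) ^ n := by
      gcongr
      exact (mul_le_mul_of_nonneg_left hdist hK0).trans (le_max_right _ _)

end Xtil

section CoefficientSeries

variable {lam : ℂ}

lemma norm_coeff_mul_le {k : ℕ} {p : ℂ} {C R : ℝ} (hp : ‖p‖ ≤ C * R ^ k) :
    ‖lam ^ k / ((2 * k)! : ℂ) * p‖ ≤ C * (‖lam‖ * R) ^ k / k ! := by
  rw [norm_mul, norm_div, norm_pow, Complex.norm_natCast]
  calc ‖lam‖ ^ k / ((2 * k)! : ℝ) * ‖p‖ ≤ ‖lam‖ ^ k / (k ! : ℝ) * (C * R ^ k) := by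
        gcongr
        omega
    _ = C * (‖lam‖ * R) ^ k / k ! := by ring

lemma summable_mul_pow_div_factorial (C r : ℝ) : Summable fun k => C * r ^ k / k ! := by
  simpa only [mul_div_assoc] using (Real.summable_pow_div_factorial r).mul_left C

lemma summable_coeff_mul {p : ℕ → ℂ} {C R : ℝ} (hp : ∀ k, ‖p k‖ ≤ C * R ^ k) :
    Summable fun k => lam ^ k / ((2 * k)! : ℂ) * p k :=
  .of_norm_bounded (summable_mul_pow_div_factorial C (‖lam‖ * R)) fun k => norm_coeff_mul_le (hp k)

lemma hasDerivAt_tsum_coeff_mul {s : Set ℝ} (hs : IsOpen s) (hs' : IsPreconnected s)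
    {P P' : ℕ → ℝ → ℂ} {C R : ℝ} (hP : ∀ k, ∀ y ∈ s, HasDerivAt (P k) (P' k y) y)
    (hP' : ∀ k, ∀ y ∈ s, ‖P' k y‖ ≤ C * R ^ k) {x : ℝ} (hx : x ∈ s)
    (hPx : Summable fun k => lam ^ k / ((2 * k)! : ℂ) * P k x) :
    HasDerivAt (fun y => ∑' k, lam ^ k / ((2 * k)! : ℂ) * P k y)
      (∑' k, lam ^ k / ((2 * k)! : ℂ) * P' k x) x :=
  hasDerivAt_tsum_of_isPreconnected (summable_mul_pow_div_factorial C (‖lam‖ * R)) hs hs'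
    (fun k y hy => (hP k y hy).const_mul _) (fun k y hy => norm_coeff_mul_le (hP' k y hy))
    hx hPx hx

lemma coeff_succ_mul (k : ℕ) :
    lam ^ (k + 1) / ((2 * (k + 1))! : ℂ) * ((2 * (k + 1) * (2 * (k + 1) - 1) : ℕ) : ℂ)
      = lam * (lam ^ k / ((2 * k)! : ℂ)) := by
  rw [show 2 * (k + 1) = 2 * k + 1 + 1 by ring, Nat.add_sub_cancel, Nat.factorial_succ,
    Nat.factorial_succ]
  have h₀ : ((2 * k)! : ℂ) ≠ 0 := Nat.cast_ne_zero.2 (Nat.factorial_ne_zero _)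
  have h₁ : ((2 * k + 1 : ℕ) : ℂ) ≠ 0 := Nat.cast_ne_zero.2 (Nat.succ_ne_zero _)
  have h₂ : ((2 * k + 1 + 1 : ℕ) : ℂ) ≠ 0 := Nat.cast_ne_zero.2 (Nat.succ_ne_zero _)
  simp only [Nat.cast_mul]
  field_simp
  ring

lemma norm_natCast_mul_le_pow {B c : ℝ} (hB : 1 ≤ B) {z : ℂ} {m N k : ℕ} (hz : ‖z‖ ≤ B ^ m)
    (hm : m ≤ 2 * k) (hN : (N : ℝ) ≤ c ^ k) : ‖(N : ℂ) * z‖ ≤ (c * B ^ 2) ^ k := by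
  rw [norm_mul, Complex.norm_natCast, mul_pow, ← pow_mul]
  exact mul_le_mul hN (hz.trans (pow_le_pow_right₀ hB hm)) (norm_nonneg _)
    ((Nat.cast_nonneg N).trans hN)

end CoefficientSeries

lemma two_mul_le_four_pow (k : ℕ) : 2 * k ≤ 4 ^ k :=
  (Nat.lt_two_pow_self).le.trans_eq (pow_mul 2 2 k)

lemma two_mul_le_sixteen_pow (k : ℕ) : 2 * k ≤ 16 ^ k :=
  (two_mul_le_four_pow k).trans (Nat.pow_le_pow_left (by norm_num) k)

lemma two_mul_mul_sub_one_le_sixteen_pow (k : ℕ) : 2 * k * (2 * k - 1) ≤ 16 ^ k :=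
  calc 2 * k * (2 * k - 1) ≤ 4 ^ k * 4 ^ k :=
        Nat.mul_le_mul (two_mul_le_four_pow k) ((Nat.sub_le _ _).trans (two_mul_le_four_pow k))
    _ = 16 ^ k := by rw [← mul_pow]; norm_num

section Series

variable {a b x₀ : ℝ} {f : ℝ → ℂ} {lam : ℂ}

noncomputable def evenSeries (f : ℝ → ℂ) (x₀ : ℝ) (lam : ℂ) (x : ℝ) : ℂ :=
  ∑' k : ℕ, lam ^ k / ((2 * k)! : ℂ) * Xtil f x₀ (2 * k) x

/-- `∑_{k ≥ 1} λ^k X̃^{(2k-1)} / (2k-1)!`, written with the coefficients of `evenSeries`;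
its `k = 0` term vanishes. -/
noncomputable def oddSeries (f : ℝ → ℂ) (x₀ : ℝ) (lam : ℂ) (x : ℝ) : ℂ :=
  ∑' k : ℕ, lam ^ k / ((2 * k)! : ℂ) * ((2 * k : ℕ) * Xtil f x₀ (2 * k - 1) x)

lemma hasDerivAt_Xtil_two_mul (hf : ContinuousOn f (Icc a b))
    (hf0 : ∀ x ∈ Icc a b, f x ≠ 0) (hx₀ : x₀ ∈ Icc a b) (k : ℕ) {x : ℝ} (hx : x ∈ Ioo a b) :
    HasDerivAt (Xtil f x₀ (2 * k))
      ((f x ^ 2)⁻¹ * ((2 * k : ℕ) * Xtil f x₀ (2 * k - 1) x)) x := by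
  rcases k with _ | k
  · simpa [Xtil] using hasDerivAt_const x (1 : ℂ)
  · have h := hasDerivAt_Xtil_succ hf hf0 hx₀ (2 * k + 1) hx
    rw [(odd_two_mul_add_one k).neg_one_pow, zpow_neg_one] at h
    rw [show 2 * (k + 1) = 2 * k + 1 + 1 by ring, Nat.add_sub_cancel]
    exact h.congr_deriv (by push_cast; ring)

lemma hasDerivAt_natCast_mul_Xtil_two_mul_sub_one (hf : ContinuousOn f (Icc a b))
    (hf0 : ∀ x ∈ Icc a b, f x ≠ 0) (hx₀ : x₀ ∈ Icc a b) (k : ℕ) {x : ℝ} (hx : x ∈ Ioo a b) :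
    HasDerivAt (fun y => ((2 * k : ℕ) : ℂ) * Xtil f x₀ (2 * k - 1) y)
      (f x ^ 2 * ((2 * k * (2 * k - 1) : ℕ) * Xtil f x₀ (2 * k - 2) x)) x := by
  rcases k with _ | k
  · simpa using hasDerivAt_const x (0 : ℂ)
  · have h := (hasDerivAt_Xtil_succ hf hf0 hx₀ (2 * k) hx).const_mul ((2 * (k + 1) : ℕ) : ℂ)
    rw [(even_two_mul k).neg_one_pow, zpow_one] at h
    rw [show 2 * (k + 1) - 1 = 2 * k + 1 by omega, show 2 * (k + 1) - 2 = 2 * k by omega]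
    exact h.congr_deriv (by push_cast; ring)

lemma hasDerivAt_evenSeries (hf : ContinuousOn f (Icc a b))
    (hf0 : ∀ x ∈ Icc a b, f x ≠ 0) (hx₀ : x₀ ∈ Icc a b) {x : ℝ} (hx : x ∈ Ioo a b) :
    HasDerivAt (evenSeries f x₀ lam) ((f x ^ 2)⁻¹ * oddSeries f x₀ lam x) x := by
  obtain ⟨K, hK⟩ := exists_norm_sq_le hf hf0
  obtain ⟨B, hB, hXB⟩ := exists_norm_Xtil_le hf hf0 hx₀
  have hodd : ∀ k, ∀ y ∈ Icc a b,
      ‖((2 * k : ℕ) : ℂ) * Xtil f x₀ (2 * k - 1) y‖ ≤ (16 * B ^ 2) ^ k := fun k y hy =>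
    norm_natCast_mul_le_pow hB (hXB (2 * k - 1) y hy) (by omega)
      (by exact_mod_cast two_mul_le_sixteen_pow k)
  have h := hasDerivAt_tsum_coeff_mul (lam := lam) (C := K) isOpen_Ioo isPreconnected_Ioo
    (fun k y hy => hasDerivAt_Xtil_two_mul hf hf0 hx₀ k hy)
    (fun k y hy => by
      rw [norm_mul]
      exact mul_le_mul (hK y (Ioo_subset_Icc_self hy)).2 (hodd k y (Ioo_subset_Icc_self hy))
        (norm_nonneg _) ((norm_nonneg _).trans (hK y (Ioo_subset_Icc_self hy)).2)) hx
    (summable_coeff_mul (C := 1) (R := 16 * B ^ 2) fun k => by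
      rw [one_mul]
      exact (hXB (2 * k) x (Ioo_subset_Icc_self hx)).trans (by rw [pow_mul]; gcongr; nlinarith))
  unfold evenSeries oddSeries
  simpa only [mul_left_comm _ (f x ^ 2)⁻¹, tsum_mul_left] using h

lemma hasDerivAt_oddSeries (hf : ContinuousOn f (Icc a b))
    (hf0 : ∀ x ∈ Icc a b, f x ≠ 0) (hx₀ : x₀ ∈ Icc a b) {x : ℝ} (hx : x ∈ Ioo a b) :
    HasDerivAt (oddSeries f x₀ lam) (f x ^ 2 * (lam * evenSeries f x₀ lam x)) x := by
  obtain ⟨K, hK⟩ := exists_norm_sq_le hf hf0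
  obtain ⟨B, hB, hXB⟩ := exists_norm_Xtil_le hf hf0 hx₀
  have hxI := Ioo_subset_Icc_self hx
  have heven : ∀ k, ∀ y ∈ Icc a b, ‖((2 * k * (2 * k - 1) : ℕ) : ℂ) * Xtil f x₀ (2 * k - 2) y‖
      ≤ 1 * (16 * B ^ 2) ^ k := fun k y hy => by
    rw [one_mul]
    exact norm_natCast_mul_le_pow hB (hXB (2 * k - 2) y hy) (by omega)
      (by exact_mod_cast two_mul_mul_sub_one_le_sixteen_pow k)
  have h := hasDerivAt_tsum_coeff_mul (lam := lam) (C := K) isOpen_Ioo isPreconnected_Ioo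
    (fun k y hy => hasDerivAt_natCast_mul_Xtil_two_mul_sub_one hf hf0 hx₀ k hy)
    (fun k y hy => by
      rw [norm_mul, ← one_mul ((16 * B ^ 2) ^ k)]
      exact mul_le_mul (hK y (Ioo_subset_Icc_self hy)).1 (heven k y (Ioo_subset_Icc_self hy))
        (norm_nonneg _) ((norm_nonneg _).trans (hK y (Ioo_subset_Icc_self hy)).1)) hx
    (summable_coeff_mul (C := 1) (R := 16 * B ^ 2) fun k => by
      rw [one_mul]
      exact norm_natCast_mul_le_pow hB (hXB (2 * k - 1) x hxI) (by omega)
        (by exact_mod_cast two_mul_le_sixteen_pow k))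
  have hshift : ∑' k, lam ^ k / ((2 * k)! : ℂ) *
      (((2 * k * (2 * k - 1) : ℕ) : ℂ) * Xtil f x₀ (2 * k - 2) x)
        = lam * evenSeries f x₀ lam x := by
    rw [(summable_coeff_mul fun k => heven k x hxI).tsum_eq_zero_add, evenSeries,
      ← tsum_mul_left]
    simp only [mul_zero, Nat.zero_sub, Nat.cast_zero, zero_mul, zero_add, ← mul_assoc,
      coeff_succ_mul, show ∀ k, 2 * (k + 1) - 2 = 2 * k by omega]
  unfold oddSeries
  simpa only [mul_left_comm _ (f x ^ 2), tsum_mul_left, hshift] using h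

end Series

section SecondDerivative

variable {F : Type*} [NormedAddCommGroup F] [NormedSpace ℝ F] {s : Set ℝ} {g g' g'' : ℝ → F}

lemma deriv_deriv_eq_of_hasDerivAt (hs : IsOpen s) (hg : ∀ x ∈ s, HasDerivAt g (g' x) x)
    (hg' : ∀ x ∈ s, HasDerivAt g' (g'' x) x) {x : ℝ} (hx : x ∈ s) :
    deriv (deriv g) x = g'' x := by
  have h : deriv g =ᶠ[𝓝 x] g' :=
    Filter.eventuallyEq_of_mem (hs.mem_nhds hx) fun y hy => (hg y hy).deriv
  rw [h.deriv_eq, (hg' x hx).deriv]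

lemma contDiffOn_two_of_hasDerivAt (hs : IsOpen s) (hg : ∀ x ∈ s, HasDerivAt g (g' x) x)
    (hg' : ∀ x ∈ s, HasDerivAt g' (g'' x) x) (hg'' : ContinuousOn g'' s) :
    ContDiffOn ℝ 2 g s := by
  have hdg : EqOn (deriv g) g' s := fun x hx => (hg x hx).deriv
  have hdg' : EqOn (deriv g') g'' s := fun x hx => (hg' x hx).deriv
  rw [show (2 : WithTop ℕ∞) = 1 + 1 by norm_num, contDiffOn_succ_iff_deriv_of_isOpen hs]
  refine ⟨fun x hx => (hg x hx).differentiableAt.differentiableWithinAt, by simp, ?_⟩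
  refine ContDiffOn.congr ?_ hdg
  rw [show (1 : WithTop ℕ∞) = 0 + 1 by norm_num, contDiffOn_succ_iff_deriv_of_isOpen hs]
  refine ⟨fun x hx => (hg' x hx).differentiableAt.differentiableWithinAt, by simp, ?_⟩
  exact contDiffOn_zero.2 (hg''.congr hdg')

end SecondDerivative

section Solution

variable {a b x₀ : ℝ} {q f : ℝ → ℂ} {lam : ℂ}

lemma hasDerivAt_of_contDiffOn_Icc (hf : ContDiffOn ℝ 2 f (Icc a b)) {x : ℝ}
    (hx : x ∈ Ioo a b) : HasDerivAt f (deriv f x) x :=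
  ((hf.contDiffAt (Icc_mem_nhds hx.1 hx.2)).differentiableAt (by norm_num)).hasDerivAt

lemma hasDerivAt_deriv_of_contDiffOn_Icc (hf : ContDiffOn ℝ 2 f (Icc a b)) {x : ℝ}
    (hx : x ∈ Ioo a b) : HasDerivAt (deriv f) (deriv (deriv f) x) x := by
  have h := hf.mono Ioo_subset_Icc_self
  rw [show (2 : WithTop ℕ∞) = 1 + 1 by norm_num,
    contDiffOn_succ_iff_deriv_of_isOpen isOpen_Ioo] at h
  exact ((h.2.2.differentiableOn one_ne_zero).differentiableAt (isOpen_Ioo.mem_nhds hx)).hasDerivAt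

lemma hasDerivAt_mul_evenSeries (hf : ContDiffOn ℝ 2 f (Icc a b))
    (hf0 : ∀ x ∈ Icc a b, f x ≠ 0) (hx₀ : x₀ ∈ Icc a b) {x : ℝ} (hx : x ∈ Ioo a b) :
    HasDerivAt (fun y => f y * evenSeries f x₀ lam y)
      (deriv f x * evenSeries f x₀ lam x + oddSeries f x₀ lam x / f x) x := by
  have hfx := hf0 x (Ioo_subset_Icc_self hx)
  refine ((hasDerivAt_of_contDiffOn_Icc hf hx).mul
    (hasDerivAt_evenSeries hf.continuousOn hf0 hx₀ hx)).congr_deriv ?_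
  field_simp

lemma hasDerivAt_deriv_mul_evenSeries_add (hf : ContDiffOn ℝ 2 f (Icc a b))
    (hfeq : ∀ x ∈ Icc a b, deriv (deriv f) x = q x * f x) (hf0 : ∀ x ∈ Icc a b, f x ≠ 0)
    (hx₀ : x₀ ∈ Icc a b) {x : ℝ} (hx : x ∈ Ioo a b) :
    HasDerivAt (fun y => deriv f y * evenSeries f x₀ lam y + oddSeries f x₀ lam y / f y)
      ((q x + lam) * (f x * evenSeries f x₀ lam x)) x := by
  have hfx := hf0 x (Ioo_subset_Icc_self hx)
  have hf'' := hasDerivAt_deriv_of_contDiffOn_Icc hf hx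
  rw [hfeq x (Ioo_subset_Icc_self hx)] at hf''
  refine ((hf''.mul (hasDerivAt_evenSeries hf.continuousOn hf0 hx₀ hx)).add
    ((hasDerivAt_oddSeries hf.continuousOn hf0 hx₀ hx).div
      (hasDerivAt_of_contDiffOn_Icc hf hx) hfx)).congr_deriv ?_
  field_simp
  ring

end Solution

theorem spps_u1_solves_general (a b : ℝ) (q f : ℝ → ℂ)
    (hq : ContinuousOn q (Icc a b))
    (hf : ContDiffOn ℝ 2 f (Icc a b))
    (hfeq : ∀ x ∈ Icc a b, deriv (deriv f) x = q x * f x)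
    (hfne : ∀ x ∈ Icc a b, f x ≠ 0)
    (x₀ : ℝ) (hx₀ : x₀ ∈ Icc a b) (lam : ℂ) :
    ContDiffOn ℝ 2
        (fun x => ∑' k : ℕ, lam ^ k / (Nat.factorial (2 * k) : ℂ) * phi f x₀ (2 * k) x)
        (Ioo a b) ∧
    ∀ x ∈ Ioo a b,
      deriv (deriv (fun y => ∑' k : ℕ,
          lam ^ k / (Nat.factorial (2 * k) : ℂ) * phi f x₀ (2 * k) y)) x
        - q x * (∑' k : ℕ, lam ^ k / (Nat.factorial (2 * k) : ℂ) * phi f x₀ (2 * k) x)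
        = lam * ∑' k : ℕ, lam ^ k / (Nat.factorial (2 * k) : ℂ) * phi f x₀ (2 * k) x := by
  have hu : ∀ x, ∑' k : ℕ, lam ^ k / (Nat.factorial (2 * k) : ℂ) * phi f x₀ (2 * k) x
      = f x * evenSeries f x₀ lam x := fun x => by
    simp only [phi, if_neg (Nat.not_odd_iff_even.2 (even_two_mul _)), evenSeries,
      ← tsum_mul_left, mul_left_comm (f x)]
  have hu' := fun x (hx : x ∈ Ioo a b) => hasDerivAt_mul_evenSeries (lam := lam) hf hfne hx₀ hx
  have hu'' := fun x (hx : x ∈ Ioo a b) =>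
    hasDerivAt_deriv_mul_evenSeries_add (lam := lam) hf hfeq hfne hx₀ hx
  have hE : ContinuousOn (evenSeries f x₀ lam) (Ioo a b) := fun x hx =>
    (hasDerivAt_evenSeries hf.continuousOn hfne hx₀ hx).continuousAt.continuousWithinAt
  simp only [hu]
  refine ⟨contDiffOn_two_of_hasDerivAt isOpen_Ioo hu' hu'' ?_, fun x hx => ?_⟩
  · exact ((hq.mono Ioo_subset_Icc_self).add continuousOn_const).mul
      ((hf.continuousOn.mono Ioo_subset_Icc_self).mul hE)
  · rw [deriv_deriv_eq_of_hasDerivAt isOpen_Ioo hu' hu'' hx]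
    ring

theorem spps_u1_solves (a b : ℝ) (hab : a < b) (q f : ℝ → ℂ)
    (hq : ContinuousOn q (Icc a b))
    (hf : ContDiffOn ℝ 2 f (Icc a b))
    (hfeq : ∀ x ∈ Icc a b, deriv (deriv f) x = q x * f x)
    (hfne : ∀ x ∈ Icc a b, f x ≠ 0)
    (x₀ : ℝ) (hx₀ : x₀ ∈ Icc a b) (lam : ℂ) :
    ContDiffOn ℝ 2
        (fun x => ∑' k : ℕ, lam ^ k / (Nat.factorial (2 * k) : ℂ) * phi f x₀ (2 * k) x)
        (Ioo a b) ∧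
    ∀ x ∈ Ioo a b,
      deriv (deriv (fun y => ∑' k : ℕ,
          lam ^ k / (Nat.factorial (2 * k) : ℂ) * phi f x₀ (2 * k) y)) x
        - q x * (∑' k : ℕ, lam ^ k / (Nat.factorial (2 * k) : ℂ) * phi f x₀ (2 * k) x)
        = lam * ∑' k : ℕ, lam ^ k / (Nat.factorial (2 * k) : ℂ) * phi f x₀ (2 * k) x :=
  spps_u1_solves_general a b q f hq hf hfeq hfne x₀ hx₀ lam
end
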